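/- arXiv:1008.2166 — 2 statements merged into one kernel-verified Lean document; each statement's English description precedes it below -/
import Mathlib

section
/- Let σ be a nonempty finite type and R = MvPolynomial σ (ZMod 2). Then the kernel of d equals the range of d: for every p ∈ R one has d(p) = 0 if and only if there exists q ∈ R with d(q) = p. Consequently all Z/2-homology groups of the chain complex (R, d) vanish. -/
/-!
Multiplication by a variable `X s` is a contracting homotopy: `d (X s * p) = p + X s * d p`,
so every cycle `p` is the boundary of `X s * p`. Conversely `d ∘ d = 0`: in characteristic two
the square of a derivation is again a derivation (the cross terms `2 D a D b` vanish), and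
`d ∘ d` kills every variable since `d (X s) = 1`.
-/

open MvPolynomial

/-- The differential operator `d = Σ_{s∈σ} ∂/∂X_s` on `MvPolynomial σ (ZMod 2)`. -/
noncomputable def dOp (σ : Type*) [Fintype σ] :
    MvPolynomial σ (ZMod 2) →ₗ[ZMod 2] MvPolynomial σ (ZMod 2) :=
  ∑ s : σ, (pderiv s).toLinearMap

namespace Derivation

variable {R A : Type*} [CommSemiring R] [CommRing A] [Algebra R A] [CharP A 2]

theorem apply_apply_mul (D : Derivation R A A) (a b : A) :
    D (D (a * b)) = a * D (D b) + b * D (D a) := by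
  simp only [leibniz, map_add, smul_eq_mul]
  linear_combination (CharTwo.add_self_eq_zero (D a * D b))

def sq (D : Derivation R A A) : Derivation R A A :=
  mk' (D.toLinearMap ∘ₗ D.toLinearMap) fun a b => D.apply_apply_mul a b

@[simp]
theorem sq_apply (D : Derivation R A A) (a : A) : D.sq a = D (D a) := rfl

end Derivation

section

variable {σ : Type*} [Fintype σ]

noncomputable def dDerivation (σ : Type*) [Fintype σ] :
    Derivation (ZMod 2) (MvPolynomial σ (ZMod 2)) (MvPolynomial σ (ZMod 2)) :=
  ∑ s : σ, pderiv s

theorem dDerivation_apply (p : MvPolynomial σ (ZMod 2)) : dDerivation σ p = dOp σ p := by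
  rw [dOp, LinearMap.sum_apply, dDerivation, ← Derivation.coeFnAddMonoidHom_apply, map_sum,
    Finset.sum_apply]
  rfl

theorem dOp_X (s : σ) : dOp σ (X s) = 1 := by
  classical
  simp [dOp, LinearMap.sum_apply, pderiv_X, Pi.single_apply]

theorem dOp_X_mul (s : σ) (p : MvPolynomial σ (ZMod 2)) :
    dOp σ (X s * p) = p + X s * dOp σ p := by
  rw [← dDerivation_apply, Derivation.leibniz, dDerivation_apply, dDerivation_apply, dOp_X]
  simp only [smul_eq_mul, mul_one, add_comm]

theorem dOp_dOp (p : MvPolynomial σ (ZMod 2)) : dOp σ (dOp σ p) = 0 := by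
  have h := derivation_eq_zero_of_forall_mem_vars (D := (dDerivation σ).sq) (f := p)
    fun s _ => by rw [Derivation.sq_apply, dDerivation_apply, dDerivation_apply, dOp_X,
      ← dDerivation_apply, Derivation.map_one_eq_zero]
  simpa only [Derivation.sq_apply, dDerivation_apply] using h

end

/-- For a nonempty finite variable set, `ker d = range d`: the chain complex
`(MvPolynomial σ (ZMod 2), d)` is acyclic (all `Z/2`-homology groups vanish). -/
theorem ker_dOp_eq_range_dOp (σ : Type*) [Fintype σ] [Nonempty σ]
    (p : MvPolynomial σ (ZMod 2)) :
    dOp σ p = 0 ↔ ∃ q : MvPolynomial σ (ZMod 2), dOp σ q = p := by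
  constructor
  · intro hp
    obtain ⟨s⟩ := ‹Nonempty σ›
    exact ⟨X s * p, by rw [dOp_X_mul, hp, mul_zero, add_zero]⟩
  · rintro ⟨q, rfl⟩
    exact dOp_dOp q
end

section
/- Let (t, η_2, …, η_n) and (t, θ_2, …, θ_n) be two bases of V* with the same first element t, and let (u_1, …, u_n) and (w_1, …, w_n) be their dual bases in V. Then the following are equivalent: (i) there is a permutation π of {2, …, n} with η_j − θ_{π(j)} ∈ span{t} for all j; (ii) there is a permutation π of {2, …, n} with u_j = w_{π(j)} for all j. Moreover, when these equivalent conditions hold, u_1 = w_1 if and only if the sets {η_2, …, η_n} and {θ_2, …, θ_n} are equal (i.e., the two bases coincide up to order). -/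
/-!
Relabelling `C` by `π` reduces everything to `π = id`. Expanding a functional `f` in the basis `C`,
its coordinates are the values `f (w k)`, so `f ∈ span {t} = span {C 0}` iff `f` vanishes on every
`w k` with `k ≠ 0`. Thus `B j ≡ C j (mod t)` for all `j ≠ 0` says exactly that `C i (u j) = B i (u j)`
for `j ≠ 0`, i.e. that `u j` and `w j` have the same `C`-coordinates. Once also `u 0 = w 0`, the
families `B` and `C` are dual to the same basis and so coincide; conversely, if every `C k` with
`k ≠ 0` is some `B j` with `j ≠ 0`, then `u 0` and `w 0` have the same `C`-coordinates.
-/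

open Module

namespace Module.Basis

variable {K V ι : Type*} [Field K] [AddCommGroup V] [Module K V]

theorem eq_of_forall_apply_eq (C : Basis ι K (Dual K V)) {x y : V} (h : ∀ k, C k x = C k y) :
    x = y := by
  have hev : Dual.eval K V (x - y) = 0 := C.ext fun k => by simp [h k]
  exact sub_eq_zero.1 <| (forall_dual_apply_eq_zero_iff K _).1 fun f => LinearMap.congr_fun hev f

variable [Fintype ι] [DecidableEq ι] (C : Basis ι K (Dual K V)) {w : ι → V}

theorem repr_eq_apply (hw : ∀ j k, C j (w k) = if j = k then 1 else 0) (f : Dual K V) (k : ι) :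
    C.repr f k = f (w k) := by
  conv_rhs => rw [← C.sum_repr f]
  simp only [LinearMap.sum_apply, LinearMap.smul_apply, hw, smul_eq_mul,
    mul_ite, mul_one, mul_zero, Finset.sum_ite_eq', Finset.mem_univ, if_true]

theorem coe_eq_of_apply_eq_ite (hw : ∀ j k, C j (w k) = if j = k then 1 else 0)
    (B : ι → Dual K V) (hB : ∀ j k, B j (w k) = if j = k then 1 else 0) : B = ⇑C :=
  funext fun j => C.ext_elem fun k => by rw [C.repr_eq_apply hw, C.repr_eq_apply hw, hB, hw]

theorem mem_span_singleton_iff (hw : ∀ j k, C j (w k) = if j = k then 1 else 0)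
    (f : Dual K V) (i₀ : ι) : f ∈ Submodule.span K {C i₀} ↔ ∀ k ≠ i₀, f (w k) = 0 := by
  constructor
  · intro hf k hk
    obtain ⟨c, rfl⟩ := Submodule.mem_span_singleton.1 hf
    simp [hw, hk.symm]
  · intro h
    have hf : f = C.repr f i₀ • C i₀ := by
      conv_lhs => rw [← C.sum_repr f]
      refine Finset.sum_eq_single i₀ (fun k _ hk => ?_) (by simp)
      rw [C.repr_eq_apply hw, h k hk, zero_smul]
    rw [hf]
    exact Submodule.smul_mem _ _ (Submodule.mem_span_singleton_self _)

end Module.Basis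

theorem Equiv.Perm.setOf_exists_ne_eq_comp {α β : Type*} (π : Equiv.Perm α) {a : α} (hπ : π a = a)
    (f : α → β) : {x | ∃ j ≠ a, x = f (π j)} = {x | ∃ j ≠ a, x = f j} := by
  have hne : ∀ j, π j ≠ a ↔ j ≠ a := fun j => (π.injective.eq_iff' hπ).not
  ext x
  constructor
  · rintro ⟨j, hj, rfl⟩
    exact ⟨π j, (hne j).2 hj, rfl⟩
  · rintro ⟨j, hj, rfl⟩
    exact ⟨π.symm j, by rwa [← hne, π.apply_symm_apply], by rw [π.apply_symm_apply]⟩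

section

variable {K V ι : Type*} [Field K] [AddCommGroup V] [Module K V] [DecidableEq ι]
  {B C : Basis ι K (Dual K V)} {t : Dual K V} {i₀ : ι} {u w : ι → V}

theorem forall_sub_mem_span_iff_forall_eq [Fintype ι] (hB : B i₀ = t) (hC : C i₀ = t)
    (hu : ∀ j k, B j (u k) = if j = k then 1 else 0)
    (hw : ∀ j k, C j (w k) = if j = k then 1 else 0) :
    (∀ j ≠ i₀, B j - C j ∈ Submodule.span K {t}) ↔ ∀ j ≠ i₀, u j = w j := by
  constructor
  · intro h j hj
    refine C.eq_of_forall_apply_eq fun i => ?_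
    have hCB : C i (u j) = B i (u j) := by
      by_cases hi : i = i₀
      · rw [hi, hB, hC]
      · have := (B.mem_span_singleton_iff hu _ i₀).1 (hB ▸ h i hi) j hj
        rwa [LinearMap.sub_apply, sub_eq_zero, eq_comm] at this
    rw [hCB, hu, hw]
  · intro h j _
    refine hC ▸ (C.mem_span_singleton_iff hw _ i₀).2 fun k hk => ?_
    rw [LinearMap.sub_apply, hw, ← h k hk, hu, sub_self]

theorem apply_eq_apply_of_setOf_subset (hB : B i₀ = t) (hC : C i₀ = t)
    (hu : ∀ j k, B j (u k) = if j = k then 1 else 0)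
    (hw : ∀ j k, C j (w k) = if j = k then 1 else 0)
    (h : {f | ∃ j ≠ i₀, f = C j} ⊆ {f | ∃ j ≠ i₀, f = B j}) : u i₀ = w i₀ := by
  refine C.eq_of_forall_apply_eq fun k => ?_
  by_cases hk : k = i₀
  · rw [hk, hw, hC, ← hB, hu]
  · obtain ⟨j, hj, hCk⟩ := h ⟨k, hk, rfl⟩
    rw [hw, hCk, hu, if_neg hj, if_neg hk]

end

/-- Two bases of the dual space `V*` of `V = (Z/2)^n` with the same first element `t`,
together with their dual bases `u`, `w` in `V`.  Then: (i) the remaining elements of the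
two bases agree modulo `t` up to a permutation iff (ii) the remaining dual-basis vectors
agree up to a permutation; and when these hold, `u 0 = w 0` iff the two bases coincide
up to order. -/
theorem dual_basis_congr_mod_first (n : ℕ) [NeZero n]
    (B C : Module.Basis (Fin n) (ZMod 2) (Module.Dual (ZMod 2) (Fin n → ZMod 2)))
    (t : Module.Dual (ZMod 2) (Fin n → ZMod 2))
    (hB : B 0 = t) (hC : C 0 = t)
    (u w : Fin n → (Fin n → ZMod 2))
    (hu : ∀ j k, B j (u k) = if j = k then 1 else 0)
    (hw : ∀ j k, C j (w k) = if j = k then 1 else 0) :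
    (((∃ π : Equiv.Perm (Fin n), π 0 = 0 ∧
        ∀ j ≠ 0, B j - C (π j) ∈ Submodule.span (ZMod 2) {t}) ↔
      (∃ π : Equiv.Perm (Fin n), π 0 = 0 ∧ ∀ j ≠ 0, u j = w (π j)))) ∧
    ((∃ π : Equiv.Perm (Fin n), π 0 = 0 ∧
        ∀ j ≠ 0, B j - C (π j) ∈ Submodule.span (ZMod 2) {t}) →
      (u 0 = w 0 ↔
        {f : Module.Dual (ZMod 2) (Fin n → ZMod 2) | ∃ j ≠ 0, f = B j} =
          {f : Module.Dual (ZMod 2) (Fin n → ZMod 2) | ∃ j ≠ 0, f = C j})) := by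
  have hwπ : ∀ π : Equiv.Perm (Fin n), ∀ j k, C.reindex π.symm j (w (π k)) =
      if j = k then 1 else 0 := fun π j k => by
    simp [Basis.reindex_apply, hw, π.injective.eq_iff]
  have key : ∀ π : Equiv.Perm (Fin n), π 0 = 0 →
      ((∀ j ≠ 0, B j - C (π j) ∈ Submodule.span (ZMod 2) {t}) ↔ ∀ j ≠ 0, u j = w (π j)) :=
    fun π hπ => by
      simpa only [Basis.reindex_apply, Equiv.symm_symm] using
        forall_sub_mem_span_iff_forall_eq hB (by simp [hπ, hC]) hu (hwπ π)
  refine ⟨exists_congr fun π => and_congr_right (key π), ?_⟩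
  rintro ⟨π, hπ, hBC⟩
  constructor
  · intro h0
    have huw : u = w ∘ π := funext fun j => by
      rcases eq_or_ne j 0 with rfl | hj
      · rw [h0, Function.comp_apply, hπ]
      · exact (key π hπ).1 hBC j hj
    subst huw
    have hBπ : ⇑B = C ∘ π := by
      simpa [Basis.reindex_apply] using (C.reindex π.symm).coe_eq_of_apply_eq_ite (hwπ π) B hu
    rw [hBπ]
    exact π.setOf_exists_ne_eq_comp hπ C
  · intro hset
    exact apply_eq_apply_of_setOf_subset hB hC hu hw hset.ge
end
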